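/- Let (Y,d) be a finite ultrametric space. Then for every ε > 0 there exists a finite ultrametric space (W, ρ) with |W| = |Y| and |Sp(W)| = |W|, and a bijection Φ : W → Y such that |ρ(w₁, w₂) − d(Φ(w₁), Φ(w₂))| ≤ ε for all w₁, w₂ ∈ W. -/

import Mathlib

/-!
Build `ρ` one point at a time. When a point `y` is added to a finite set `s` on which `ρ` is
already an `ε`-approximation of `d` with `|s|` values, let `x ∈ s` be a point nearest to `y`. In
an ultrametric space `d y z = max (d y x) (d x z)` for all `z ∈ s`, so declaring
`ρ y z = max r (ρ x z)` for a fresh value `r ∈ (d y x, d y x + ε]` outside the current spectrum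
keeps `ρ` an ultrametric `ε`-close to `d` and adds exactly one value, `r`, to its spectrum.
-/

open Finset

section

variable {Y : Type*}

structure IsUltrametricOn (d : Y → Y → ℝ) (s : Set Y) : Prop where
  symm : ∀ x ∈ s, ∀ y ∈ s, d x y = d y x
  eq_zero_iff : ∀ x ∈ s, ∀ y ∈ s, d x y = 0 ↔ x = y
  le_max : ∀ x ∈ s, ∀ y ∈ s, ∀ z ∈ s, d x y ≤ max (d x z) (d z y)

namespace IsUltrametricOn

variable {d : Y → Y → ℝ} {s t : Set Y} {x y z : Y}

theorem mono (hd : IsUltrametricOn d t) (hst : s ⊆ t) : IsUltrametricOn d s where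
  symm x hx y hy := hd.symm x (hst hx) y (hst hy)
  eq_zero_iff x hx y hy := hd.eq_zero_iff x (hst hx) y (hst hy)
  le_max x hx y hy z hz := hd.le_max x (hst hx) y (hst hy) z (hst hz)

theorem self_eq_zero (hd : IsUltrametricOn d s) (hx : x ∈ s) : d x x = 0 :=
  (hd.eq_zero_iff x hx x hx).2 rfl

theorem nonneg (hd : IsUltrametricOn d s) (hx : x ∈ s) (hy : y ∈ s) : 0 ≤ d x y := by
  have := hd.le_max x hx x hx y hy
  rwa [hd.self_eq_zero hx, hd.symm y hy x hx, max_self] at this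

theorem eq_max_of_le (hd : IsUltrametricOn d s) (hx : x ∈ s) (hy : y ∈ s) (hz : z ∈ s)
    (hxz : d y x ≤ d y z) : d y z = max (d y x) (d x z) := by
  refine le_antisymm (hd.le_max y hy z hz x hx) (max_le hxz ?_)
  calc d x z ≤ max (d x y) (d y z) := hd.le_max x hx z hz y hy
    _ = d y z := by rw [hd.symm x hx y hy, max_eq_right hxz]

end IsUltrametricOn

noncomputable def distSpectrum (d : Y → Y → ℝ) (s : Finset Y) : Finset ℝ :=
  (s ×ˢ s).image fun p => d p.1 p.2

section Glue

variable [DecidableEq Y]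

/-- Attaches a new point `y` to `x` at height `r`; the values of `ρ` involving `y` are discarded. -/
def glue (ρ : Y → Y → ℝ) (x y : Y) (r : ℝ) (u v : Y) : ℝ :=
  if u = y then (if v = y then 0 else max r (ρ x v))
  else if v = y then max r (ρ x u) else ρ u v

variable {ρ : Y → Y → ℝ} {s : Set Y} {x y u v : Y} {r : ℝ}

@[simp] theorem glue_self : glue ρ x y r y y = 0 := by simp [glue]

theorem glue_left (hv : v ≠ y) : glue ρ x y r y v = max r (ρ x v) := by simp [glue, hv]

theorem glue_right (hu : u ≠ y) : glue ρ x y r u y = max r (ρ x u) := by simp [glue, hu]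

theorem glue_of_ne (hu : u ≠ y) (hv : v ≠ y) : glue ρ x y r u v = ρ u v := by simp [glue, hu, hv]

theorem IsUltrametricOn.glue_insert (hρ : IsUltrametricOn ρ s) (hx : x ∈ s) (hy : y ∉ s)
    (hr : 0 < r) :
    IsUltrametricOn (glue ρ x y r) (insert y s) := by
  have ne : ∀ {u}, u ∈ s → u ≠ y := fun hu h => hy (h ▸ hu)
  refine ⟨?_, ?_, ?_⟩
  · rintro u (rfl | hu) v (rfl | hv)
    · rfl
    · rw [glue_left (ne hv), glue_right (ne hv)]
    · rw [glue_left (ne hu), glue_right (ne hu)]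
    · rw [glue_of_ne (ne hu) (ne hv), glue_of_ne (ne hv) (ne hu), hρ.symm u hu v hv]
  · rintro u (rfl | hu) v (rfl | hv)
    · simp
    · rw [glue_left (ne hv)]
      exact iff_of_false (lt_max_of_lt_left hr).ne' (ne hv).symm
    · rw [glue_right (ne hu)]
      exact iff_of_false (lt_max_of_lt_left hr).ne' (ne hu)
    · rw [glue_of_ne (ne hu) (ne hv)]
      exact hρ.eq_zero_iff u hu v hv
  · rintro u (rfl | hu) v (rfl | hv) w (rfl | hw)
    · simp
    · rw [glue_self, glue_left (ne hw), glue_right (ne hw)]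
      exact le_max_of_le_left (hr.le.trans (le_max_left _ _))
    · rw [glue_self, max_eq_right (glue_left (ne hv) ▸ hr.le.trans (le_max_left _ _))]
    · rw [glue_left (ne hv), glue_left (ne hw), glue_of_ne (ne hw) (ne hv)]
      have := hρ.le_max x hx v hv w hw
      grind
    · rw [glue_self, max_eq_left (glue_right (ne hu) ▸ hr.le.trans (le_max_left _ _))]
    · rw [glue_right (ne hu), glue_right (ne hw), glue_of_ne (ne hu) (ne hw)]
      have := hρ.le_max x hx u hu w hw
      rw [hρ.symm w hw u hu] at this
      grind
    · rw [glue_right (ne hu), glue_left (ne hv), glue_of_ne (ne hu) (ne hv)]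
      have := hρ.le_max u hu v hv x hx
      rw [hρ.symm u hu x hx] at this
      grind
    · simp only [glue_of_ne (ne hu) (ne hv), glue_of_ne (ne hu) (ne hw), glue_of_ne (ne hw) (ne hv)]
      exact hρ.le_max u hu v hv w hw

theorem distSpectrum_glue {s : Finset Y} (hρ : IsUltrametricOn ρ s) (hx : x ∈ s) (hy : y ∉ s)
    (hr : 0 ≤ r) : distSpectrum (glue ρ x y r) (insert y s) = insert r (distSpectrum ρ s) := by
  have ne : ∀ {u}, u ∈ s → u ≠ y := fun hu h => hy (h ▸ hu)
  have mem : ∀ {u v}, u ∈ s → v ∈ s → ρ u v ∈ distSpectrum ρ s := fun hu hv =>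
    mem_image_of_mem _ (mk_mem_product hu hv)
  have max_mem : ∀ {v}, v ∈ s → max r (ρ x v) ∈ insert r (distSpectrum ρ s) := fun {v} hv => by
    rcases max_choice r (ρ x v) with h | h <;> rw [h]
    exacts [mem_insert_self _ _, mem_insert_of_mem (mem hx hv)]
  apply Subset.antisymm
  · intro t ht
    obtain ⟨⟨u, v⟩, huv, rfl⟩ := mem_image.1 ht
    simp only [mem_product, mem_insert] at huv
    obtain ⟨rfl | hu, rfl | hv⟩ := huv
    · rw [glue_self]
      exact mem_insert_of_mem (hρ.self_eq_zero hx ▸ mem hx hx)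
    · exact glue_left (ne hv) ▸ max_mem hv
    · exact glue_right (ne hu) ▸ max_mem hu
    · exact glue_of_ne (ne hu) (ne hv) ▸ mem_insert_of_mem (mem hu hv)
  · simp only [distSpectrum, insert_subset_iff, image_subset_iff, mem_product, and_imp, Prod.forall]
    refine ⟨?_, fun u v hu hv => ?_⟩
    · refine mem_image.2 ⟨(y, x), mk_mem_product (mem_insert_self _ _) (mem_insert_of_mem hx), ?_⟩
      simp [glue_left (ne hx), hρ.self_eq_zero hx, hr]
    · refine mem_image.2 ⟨(u, v), mk_mem_product (mem_insert_of_mem hu) (mem_insert_of_mem hv), ?_⟩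
      exact glue_of_ne (ne hu) (ne hv)

variable {d : Y → Y → ℝ} {ε : ℝ}

theorem abs_glue_sub_le (hd : IsUltrametricOn d (insert y s)) (hx : x ∈ s) (hy : y ∉ s)
    (hx_min : ∀ z ∈ s, d y x ≤ d y z) (hρ : ∀ u ∈ s, ∀ v ∈ s, |ρ u v - d u v| ≤ ε)
    (hr : |r - d y x| ≤ ε) :
    ∀ u ∈ insert y s, ∀ v ∈ insert y s, |glue ρ x y r u v - d u v| ≤ ε := by
  have ne : ∀ {u}, u ∈ s → u ≠ y := fun hu h => hy (h ▸ hu)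
  have hy' := Set.mem_insert y s
  have hs : ∀ {u}, u ∈ s → u ∈ insert y s := Set.mem_insert_of_mem y
  have through_x : ∀ {v}, v ∈ s → |max r (ρ x v) - d y v| ≤ ε := fun {v} hv => by
    rw [hd.eq_max_of_le (hs hx) hy' (hs hv) (hx_min v hv)]
    exact (abs_max_sub_max_le_max _ _ _ _).trans (max_le hr (hρ x hx v hv))
  rintro u (rfl | hu) v (rfl | hv)
  · simpa [hd.self_eq_zero hy'] using (abs_nonneg _).trans hr
  · exact glue_left (ne hv) ▸ through_x hv
  · rw [glue_right (ne hu), hd.symm _ (hs hu) _ hy']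
    exact through_x hu
  · exact glue_of_ne (ne hu) (ne hv) ▸ hρ u hu v hv

end Glue

theorem IsUltrametricOn.exists_close_extremal [DecidableEq Y] {d : Y → Y → ℝ} {ε : ℝ}
    {s : Finset Y} (hd : IsUltrametricOn d s) (hε : 0 < ε) :
    ∃ ρ, IsUltrametricOn ρ s ∧ (∀ u ∈ s, ∀ v ∈ s, |ρ u v - d u v| ≤ ε) ∧
      (distSpectrum ρ s).card = s.card := by
  induction s using Finset.induction_on with
  | empty => exact ⟨d, hd, by simp, by simp [distSpectrum]⟩
  | insert y s hy ih =>
    rw [coe_insert] at hd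
    rcases s.eq_empty_or_nonempty with rfl | hs
    · exact ⟨d, by simpa using hd, by simp [hε.le], by simp [distSpectrum]⟩
    obtain ⟨ρ, hρ, hρd, hcard⟩ := ih (hd.mono (Set.subset_insert _ _))
    obtain ⟨x, hx, hx_min⟩ := s.exists_min_image (d y) hs
    obtain ⟨r, ⟨hr_gt, hr_le⟩, hr_new⟩ :=
      (Set.Ioc_infinite (lt_add_of_pos_right (d y x) hε)).exists_notMem_finset (distSpectrum ρ s)
    have hr : 0 < r := (hd.nonneg (Set.mem_insert y _) (Set.mem_insert_of_mem y hx)).trans_lt hr_gt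
    refine ⟨glue ρ x y r, ?_, ?_, ?_⟩
    · rw [coe_insert]
      exact hρ.glue_insert hx hy hr
    · simpa only [← mem_coe, coe_insert] using
        abs_glue_sub_le hd hx hy hx_min hρd (abs_le.2 ⟨by linarith, by linarith⟩)
    · rw [distSpectrum_glue hρ hx hy hr.le, card_insert_of_notMem hr_new,
        card_insert_of_notMem hy, hcard]

end

theorem eps_isometry_from_extremal_general {Y : Type*} [Fintype Y]
    (d : Y → Y → ℝ)
    (hsymm : ∀ x y, d x y = d y x)
    (hzero : ∀ x y, d x y = 0 ↔ x = y)
    (hultra : ∀ x y z, d x y ≤ max (d x z) (d z y))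
    (ε : ℝ) (hε : 0 < ε) :
    ∃ ρ : Y → Y → ℝ,
      (∀ x y, 0 ≤ ρ x y) ∧ (∀ x y, ρ x y = ρ y x) ∧
      (∀ x y, ρ x y = 0 ↔ x = y) ∧
      (∀ x y z, ρ x y ≤ max (ρ x z) (ρ z y)) ∧
      (Finset.univ.image (fun p : Y × Y => ρ p.1 p.2)).card = Fintype.card Y ∧
      ∃ Φ : Y ≃ Y, ∀ w₁ w₂ : Y, |ρ w₁ w₂ - d (Φ w₁) (Φ w₂)| ≤ ε := by
  classical
  have hd : IsUltrametricOn d (univ : Finset Y) :=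
    ⟨fun x _ y _ => hsymm x y, fun x _ y _ => hzero x y, fun x _ y _ z _ => hultra x y z⟩
  obtain ⟨ρ, hρ, hρd, hcard⟩ := hd.exists_close_extremal hε
  refine ⟨ρ, fun x y => hρ.nonneg (mem_univ x) (mem_univ y),
    fun x y => hρ.symm x (mem_univ x) y (mem_univ y),
    fun x y => hρ.eq_zero_iff x (mem_univ x) y (mem_univ y),
    fun x y z => hρ.le_max x (mem_univ x) y (mem_univ y) z (mem_univ z), ?_,
    Equiv.refl Y, fun x y => hρd x (mem_univ x) y (mem_univ y)⟩
  rwa [distSpectrum, univ_product_univ] at hcard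

/-- Every finite ultrametric space admits, for every `ε > 0`, a bijective
`ε`-isometry from a finite ultrametric space which is extremal for the
Gomory-Hu inequality. -/
theorem eps_isometry_from_extremal {Y : Type*} [Fintype Y]
    (d : Y → Y → ℝ)
    (hnonneg : ∀ x y, 0 ≤ d x y)
    (hsymm : ∀ x y, d x y = d y x)
    (hzero : ∀ x y, d x y = 0 ↔ x = y)
    (hultra : ∀ x y z, d x y ≤ max (d x z) (d z y))
    (ε : ℝ) (hε : 0 < ε) :
    ∃ ρ : Y → Y → ℝ,
      (∀ x y, 0 ≤ ρ x y) ∧ (∀ x y, ρ x y = ρ y x) ∧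
      (∀ x y, ρ x y = 0 ↔ x = y) ∧
      (∀ x y z, ρ x y ≤ max (ρ x z) (ρ z y)) ∧
      (Finset.univ.image (fun p : Y × Y => ρ p.1 p.2)).card = Fintype.card Y ∧
      ∃ Φ : Y ≃ Y, ∀ w₁ w₂ : Y, |ρ w₁ w₂ - d (Φ w₁) (Φ w₂)| ≤ ε :=
  eps_isometry_from_extremal_general d hsymm hzero hultra ε hε
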